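/- Define q_j ∈ F_2[w_2, w_3] by q_0 = 1, q_{<0} = 0, q_j = w_2 q_{j−2} + w_3 q_{j−3}. Then for all n with n ≤ 2^t − 3 and i = 2^t − 3 − n, the relation q_i q_n + q_{i+1} q_{n−1} + w_3 q_{i−1} q_{n−2} = 0 holds in F_2[w_2, w_3]. -/
import Mathlib

open MvPolynomial

/-- The polynomials `q j ∈ F₂[w₂,w₃]` (with `w₂ = X 0`, `w₃ = X 1`): `q 0 = 1`,
`q j = 0` for `j < 0`, and `q j = w₂ q (j-2) + w₃ q (j-3)`. -/
noncomputable def q3 (j : ℤ) : MvPolynomial (Fin 2) (ZMod 2) :=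
  if j < 0 then 0
  else if j = 0 then 1
  else X 0 * q3 (j - 2) + X 1 * q3 (j - 3)
termination_by j.toNat
decreasing_by all_goals omega

lemma q3_neg {j : ℤ} (h : j < 0) : q3 j = 0 := by rw [q3]; simp [h]

lemma q3_zero : q3 0 = 1 := by rw [q3]; simp

lemma q3_rec {j : ℤ} (h : j ≠ 0) : q3 j = X 0 * q3 (j - 2) + X 1 * q3 (j - 3) := by
  rcases lt_or_gt_of_ne h with h' | h'
  · rw [q3_neg h', q3_neg (by omega), q3_neg (by omega)]; ring
  · rw [q3]; simp [show ¬ j < 0 by omega, h]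

lemma two_eq_zero : (2 : MvPolynomial (Fin 2) (ZMod 2)) = 0 := by
  have := CharP.cast_eq_zero (MvPolynomial (Fin 2) (ZMod 2)) 2
  simpa using this

/-- Doubling identities, proved by simultaneous strong induction. -/
lemma q3_pair (j : ℤ) :
    q3 (2*j) = q3 j ^ 2 + X 0 * q3 (j-1) ^ 2 ∧ q3 (2*j+3) = X 1 * q3 j ^ 2 := by
  rcases lt_trichotomy j 0 with h | h | h
  · constructor
    · rw [q3_neg (by omega : 2*j < 0), q3_neg h, q3_neg (by omega : j - 1 < 0)]; ring
    · rcases eq_or_lt_of_le (by omega : j ≤ -1) with h1 | h1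
      · subst h1
        rw [show 2*(-1:ℤ)+3 = 1 by ring, q3_rec (by norm_num : (1:ℤ) ≠ 0),
          q3_neg (by norm_num : (1:ℤ)-2 < 0), q3_neg (by norm_num : (1:ℤ)-3 < 0),
          q3_neg (by norm_num : (-1:ℤ) < 0)]
        ring
      · rw [q3_neg (by omega : 2*j+3 < 0), q3_neg h]; ring
  · subst h
    constructor
    · rw [show 2*(0:ℤ) = 0 by ring, q3_zero, q3_neg (by norm_num : (0:ℤ)-1 < 0)]; ring
    · rw [show 2*(0:ℤ)+3 = 3 by ring, q3_rec (by norm_num : (3:ℤ) ≠ 0),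
        q3_rec (by norm_num : (3:ℤ)-2 ≠ 0)]
      norm_num
      rw [q3_zero, q3_neg (by norm_num : (-1:ℤ) < 0), q3_neg (by norm_num : (-2:ℤ) < 0)]
      ring
  · have ih1 := q3_pair (j-1)
    have ih3 := q3_pair (j-3)
    have h1 : q3 (2*j) = q3 j ^ 2 + X 0 * q3 (j-1) ^ 2 := by
      rw [q3_rec (by omega : 2*j ≠ 0),
        show 2*j - 2 = 2*(j-1) by ring, show 2*j - 3 = 2*(j-3)+3 by ring,
        ih1.1, ih3.2, q3_rec (by omega : j ≠ 0), CharTwo.add_sq,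
        show j - 1 - 1 = j - 2 by ring]
      rw [mul_pow, mul_pow]
      ring
    have h2 : q3 (2*j+3) = X 1 * q3 j ^ 2 := by
      rw [q3_rec (by omega : 2*j+3 ≠ 0),
        show 2*j+3-2 = 2*(j-1)+3 by ring, show 2*j+3-3 = 2*j by ring,
        ih1.2, h1]
      linear_combination (X 0 * X 1 * q3 (j-1)^2) * two_eq_zero
    exact ⟨h1, h2⟩
termination_by j.toNat
decreasing_by all_goals omega

lemma q3_pow2 (t : ℕ) (ht : 2 ≤ t) : q3 (2 ^ t - 3) = 0 := by
  induction t, ht using Nat.le_induction with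
  | base =>
    rw [show (2:ℤ)^2 - 3 = 1 by norm_num, q3_rec (by norm_num : (1:ℤ) ≠ 0),
      q3_neg (by norm_num : (1:ℤ)-2 < 0), q3_neg (by norm_num : (1:ℤ)-3 < 0)]
    ring
  | succ t ht ih =>
    have : (2:ℤ)^(t+1) - 3 = 2*(2^t - 3) + 3 := by ring
    rw [this, (q3_pair (2^t - 3)).2, ih]
    ring

/-- The shift invariance of the relation. -/
lemma q3_shift {i n : ℤ} (hn : n ≠ 0) (hi : i ≠ -2) :
    q3 i * q3 n + q3 (i+1) * q3 (n-1) + X 1 * q3 (i-1) * q3 (n-2) =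
      q3 (i+1) * q3 (n-1) + q3 (i+2) * q3 (n-2) + X 1 * q3 i * q3 (n-3) := by
  have hrn := q3_rec hn
  have hri : q3 (i+2) = X 0 * q3 i + X 1 * q3 (i-1) := by
    rw [q3_rec (by omega : i+2 ≠ 0), show i+2-2 = i by ring, show i+2-3 = i-1 by ring]
  rw [hrn, hri]; ring

lemma q3_aux (s : ℤ) (hs0 : 0 ≤ s) (hq : q3 s = 0) (n : ℤ) (hn : n ≤ s) :
    q3 (s-n) * q3 n + q3 (s-n+1) * q3 (n-1) + X 1 * q3 (s-n-1) * q3 (n-2) = 0 := by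
  rcases lt_trichotomy n 0 with h | h | h
  · rw [q3_neg h, q3_neg (by omega : n-1 < 0), q3_neg (by omega : n-2 < 0)]; ring
  · subst h
    rw [q3_zero, q3_neg (by norm_num : (0:ℤ)-1 < 0), q3_neg (by norm_num : (0:ℤ)-2 < 0),
      show s - 0 = s by ring, hq]
    ring
  · have key := q3_shift (i := s - n) (n := n) (by omega) (by omega)
    rw [key, show s-n+1 = s-(n-1) by ring, show s-n+2 = s-(n-1)+1 by ring,
      show s-n = s-(n-1)-1 by ring, show n-2 = (n-1)-1 by ring, show n-3 = (n-1)-2 by ring]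
    exact q3_aux s hs0 hq (n-1) (by omega)
termination_by n.toNat
decreasing_by omega

/-- **descended relations, k = 3.** For all `n ≤ 2^t − 3` and
`i = 2^t − 3 − n`, the relation `q_i q_n + q_{i+1} q_{n−1} + w₃ q_{i−1} q_{n−2} = 0`
holds in `F₂[w₂,w₃]`. -/
theorem q3_descended_relation (t : ℕ) (ht : 2 ≤ t) (n : ℤ) (hn : n ≤ 2 ^ t - 3) :
    q3 (2 ^ t - 3 - n) * q3 n + q3 (2 ^ t - 3 - n + 1) * q3 (n - 1) +
      X 1 * q3 (2 ^ t - 3 - n - 1) * q3 (n - 2) = 0 := by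
  have h4 : (4:ℤ) ≤ 2 ^ t := by
    calc (4:ℤ) = 2^2 := by norm_num
    _ ≤ 2^t := pow_le_pow_right₀ (by norm_num) ht
  exact q3_aux (2^t - 3) (by omega) (q3_pow2 t ht) n hn
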